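/- Let G be a finite group acting on a set X commuting with a map T : X → X, and let x be a periodic point. Then the quotient orbit length |O_{T'}(π(x))| times |O_T(x) ∩ O_G(x)| equals |O_T(x)|, and the fiber π⁻¹(O_{T'}(π(x))) restricted to periodic points of the same stabilizer class is a union of exactly |O_G(x)|/|O_T(x) ∩ O_G(x)| closed T-orbits, each of length |O_T(x)|; in particular π⁻¹(O_{T'}(π(x))) ∩ (⋃_{g∈G} g·O_T(x)) has cardinality |O_G(x)|·|O_T(x)| / |O_T(x) ∩ O_G(x)|. -/

import Mathlib

def Torbit {X : Type*} (T : X → X) (x : X) : Set X := {y | ∃ i : ℕ, T^[i] x = y}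

/-!
`T` and every `g ∈ G` map periodic points injectively to periodic points, and the `T`-orbit of a
periodic point is a finite cycle. The number `|O_T(y) ∩ O_G(y)|` is constant along `O_T(x)`:
`T` maps `O_T(y) ∩ O_G(y)` injectively into `O_T(Ty) ∩ O_G(Ty)`, so the number can only grow
along the cycle. It is also constant along `O_G(x)`, since `g` maps one set onto the other. Each
identity is then a count of fibres: `π` on `O_T(x)` and `y ↦ O_T(y)` on `O_G(x)` have fibres of
size `k`, and `y ↦ O_T(y)` on `⋃ g, g • O_T(x)` has fibres of size `|O_T(x)|`.
-/

open Function Set MulAction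

theorem Set.ncard_image_mul_of_ncard_fiber_eq {α β : Type*} {S : Set α} (f : α → β) {c : ℕ}
    (h : ∀ y ∈ S, {z ∈ S | f z = f y}.ncard = c) : (f '' S).ncard * c = S.ncard := by
  classical
  by_cases hS : S.Finite
  · lift S to Finset α using hS
    rw [← Finset.coe_image, ncard_coe_finset, ncard_coe_finset, Finset.card_eq_sum_card_image f S,
      Finset.sum_const_nat]
    rintro _ hb
    obtain ⟨y, hy, rfl⟩ := Finset.mem_image.mp hb
    rw [← h y hy, ← ncard_coe_finset, Finset.coe_filter]
    rfl
  · rw [Set.Infinite.ncard hS]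
    rcases Nat.eq_zero_or_pos c with rfl | hc
    · exact mul_zero _
    suffices hfS : (f '' S).Infinite by rw [hfS.ncard, zero_mul]
    intro hfS
    have hfib : ∀ b ∈ f '' S, {z ∈ S | f z = b}.Finite := by
      rintro _ ⟨y, hy, rfl⟩
      exact finite_of_ncard_pos (h y hy ▸ hc)
    exact hS ((hfS.biUnion hfib).subset fun y hy => mem_biUnion (mem_image_of_mem f hy) ⟨hy, rfl⟩)

section Torbit

variable {X Y : Type*} {T : X → X} {x y : X}

theorem iterate_mem_Torbit (T : X → X) (x : X) (i : ℕ) : T^[i] x ∈ Torbit T x := ⟨i, rfl⟩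

theorem mem_Torbit_self (T : X → X) (x : X) : x ∈ Torbit T x := iterate_mem_Torbit T x 0

theorem Function.Semiconj.image_Torbit {f : X → Y} {T' : Y → Y} (h : Semiconj f T T') (x : X) :
    f '' Torbit T x = Torbit T' (f x) := by
  ext z
  constructor
  · rintro ⟨_, ⟨i, rfl⟩, rfl⟩
    exact ⟨i, ((h.iterate_right i) x).symm⟩
  · rintro ⟨i, rfl⟩
    exact ⟨_, iterate_mem_Torbit T x i, (h.iterate_right i) x⟩

theorem Torbit_subset_of_mem (h : y ∈ Torbit T x) : Torbit T y ⊆ Torbit T x := by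
  obtain ⟨i, rfl⟩ := h
  rintro _ ⟨j, rfl⟩
  exact ⟨j + i, iterate_add_apply T j i x⟩

theorem Torbit_subset_periodicPts (hx : x ∈ periodicPts T) : Torbit T x ⊆ periodicPts T := by
  obtain ⟨n, hn, hper⟩ := hx
  rintro _ ⟨i, rfl⟩
  exact ⟨n, hn, hper.apply_iterate i⟩

theorem mem_Torbit_symm (hx : x ∈ periodicPts T) (h : y ∈ Torbit T x) : x ∈ Torbit T y := by
  obtain ⟨n, hn, hper⟩ := hx
  obtain ⟨i, rfl⟩ := h
  refine ⟨n * i - i, ?_⟩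
  rw [← iterate_add_apply, Nat.sub_add_cancel (Nat.le_mul_of_pos_left i hn)]
  exact hper.mul_const i

theorem Torbit_eq_of_mem (hx : x ∈ periodicPts T) (h : y ∈ Torbit T x) : Torbit T y = Torbit T x :=
  (Torbit_subset_of_mem h).antisymm (Torbit_subset_of_mem (mem_Torbit_symm hx h))

theorem Torbit_eq_iff (hx : x ∈ periodicPts T) : Torbit T y = Torbit T x ↔ y ∈ Torbit T x :=
  ⟨fun h => h ▸ mem_Torbit_self T y, Torbit_eq_of_mem hx⟩

theorem Torbit_finite (hx : x ∈ periodicPts T) : (Torbit T x).Finite := by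
  refine ((finite_Iio (minimalPeriod T x)).image (T^[·] x)).subset ?_
  rintro _ ⟨i, rfl⟩
  exact ⟨i % minimalPeriod T x, Nat.mod_lt i (minimalPeriod_pos_of_mem_periodicPts hx),
    iterate_mod_minimalPeriod_eq⟩

theorem le_of_mem_Torbit {α : Type*} [Preorder α] {f : X → α}
    (hf : ∀ z ∈ Torbit T x, f z ≤ f (T z)) (h : y ∈ Torbit T x) : f x ≤ f y := by
  obtain ⟨i, rfl⟩ := h
  induction i with
  | zero => exact le_rfl
  | succ i ih => exact ih.trans ((iterate_succ_apply' T i x).symm ▸ hf _ (iterate_mem_Torbit T x i))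

theorem eq_of_mem_Torbit {α : Type*} [PartialOrder α] {f : X → α}
    (hf : ∀ z ∈ periodicPts T, f z ≤ f (T z)) (hx : x ∈ periodicPts T) (h : y ∈ Torbit T x) :
    f y = f x := by
  have hmono : ∀ w ∈ periodicPts T, ∀ z ∈ Torbit T w, f w ≤ f z := fun w hw _ =>
    le_of_mem_Torbit fun z hz => hf z (Torbit_subset_periodicPts hw hz)
  exact (hmono x hx y h).antisymm'
    (hmono y (Torbit_subset_periodicPts hx h) x (mem_Torbit_symm hx h))

end Torbit

section Equivariant

variable {G X : Type*} [Group G] [MulAction G X] {T : X → X} {x y : X}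

theorem semiconj_smul (hcomm : ∀ (g : G) (y : X), g • T y = T (g • y)) (g : G) :
    Semiconj (g • · : X → X) T T :=
  hcomm g

theorem smul_mem_periodicPts (hcomm : ∀ (g : G) (y : X), g • T y = T (g • y))
    (hx : x ∈ periodicPts T) (g : G) : g • x ∈ periodicPts T :=
  (semiconj_smul hcomm g).mapsTo_periodicPts hx

theorem ncard_Torbit_smul (hcomm : ∀ (g : G) (y : X), g • T y = T (g • y)) (g : G) (x : X) :
    (Torbit T (g • x)).ncard = (Torbit T x).ncard := by
  rw [← (semiconj_smul hcomm g).image_Torbit, ncard_image_of_injective _ (MulAction.injective g)]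

theorem ncard_Torbit_inter_orbit_smul (hcomm : ∀ (g : G) (y : X), g • T y = T (g • y)) (g : G)
    (y : X) : (Torbit T (g • y) ∩ orbit G (g • y)).ncard = (Torbit T y ∩ orbit G y).ncard := by
  have horbit : (g • ·) '' orbit G y = orbit G (g • y) := by
    rw [image_smul, smul_orbit, orbit_smul]
  rw [← (semiconj_smul hcomm g).image_Torbit, ← horbit, ← image_inter (MulAction.injective g),
    ncard_image_of_injective _ (MulAction.injective g)]

theorem ncard_Torbit_inter_orbit_le_apply (hcomm : ∀ (g : G) (y : X), g • T y = T (g • y))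
    (hy : y ∈ periodicPts T) :
    (Torbit T y ∩ orbit G y).ncard ≤ (Torbit T (T y) ∩ orbit G (T y)).ncard := by
  have hTy : Torbit T (T y) = Torbit T y := Torbit_eq_of_mem hy (iterate_mem_Torbit T y 1)
  have hinj : InjOn T (Torbit T y ∩ orbit G y) :=
    (bijOn_periodicPts T).injOn.mono (inter_subset_left.trans (Torbit_subset_periodicPts hy))
  refine ncard_le_ncard_of_injOn T ?_ hinj ((Torbit_finite hy).subset (hTy ▸ inter_subset_left))
  rintro z ⟨hz, g, rfl⟩
  exact ⟨hTy ▸ Torbit_subset_of_mem hz (iterate_mem_Torbit T _ 1), g, hcomm g y⟩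

theorem ncard_Torbit_inter_orbit_of_mem (hcomm : ∀ (g : G) (y : X), g • T y = T (g • y))
    (hx : x ∈ periodicPts T) (hy : y ∈ Torbit T x) :
    (Torbit T y ∩ orbit G y).ncard = (Torbit T x ∩ orbit G x).ncard :=
  eq_of_mem_Torbit (f := fun y => (Torbit T y ∩ orbit G y).ncard)
    (fun _ hz => ncard_Torbit_inter_orbit_le_apply hcomm hz) hx hy

theorem ncard_Torbit_mk_mul (hcomm : ∀ (g : G) (y : X), g • T y = T (g • y))
    {T' : Quotient (orbitRel G X) → Quotient (orbitRel G X)}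
    (hT' : Semiconj (Quotient.mk (orbitRel G X)) T T') (hx : x ∈ periodicPts T) :
    (Torbit T' (Quotient.mk _ x)).ncard * (Torbit T x ∩ orbit G x).ncard = (Torbit T x).ncard := by
  rw [← hT'.image_Torbit]
  refine ncard_image_mul_of_ncard_fiber_eq _ fun y hy => ?_
  have hfiber : {z ∈ Torbit T x | Quotient.mk (orbitRel G X) z = Quotient.mk _ y} =
      Torbit T y ∩ orbit G y := by
    rw [Torbit_eq_of_mem hx hy]
    ext z
    exact and_congr_right fun _ => Quotient.eq.trans orbitRel_apply
  rw [hfiber, ncard_Torbit_inter_orbit_of_mem hcomm hx hy]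

theorem iUnion_Torbit_smul_subset_preimage {T' : Quotient (orbitRel G X) → Quotient (orbitRel G X)}
    (hT' : Semiconj (Quotient.mk (orbitRel G X)) T T') (x : X) :
    ⋃ g : G, Torbit T (g • x) ⊆ Quotient.mk _ ⁻¹' Torbit T' (Quotient.mk _ x) := by
  refine iUnion_subset fun g => ?_
  rw [← image_subset_iff, hT'.image_Torbit, Quotient.sound (mem_orbit x g)]

theorem Torbit_eq_smul_of_mem_iUnion (hcomm : ∀ (g : G) (y : X), g • T y = T (g • y))
    (hx : x ∈ periodicPts T) (hy : y ∈ ⋃ g : G, Torbit T (g • x)) :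
    ∃ g : G, Torbit T y = Torbit T (g • x) := by
  obtain ⟨g, hg⟩ := mem_iUnion.mp hy
  exact ⟨g, Torbit_eq_of_mem (smul_mem_periodicPts hcomm hx g) hg⟩

theorem ncard_Torbit_of_mem_iUnion (hcomm : ∀ (g : G) (y : X), g • T y = T (g • y))
    (hx : x ∈ periodicPts T) (hy : y ∈ ⋃ g : G, Torbit T (g • x)) :
    (Torbit T y).ncard = (Torbit T x).ncard := by
  obtain ⟨g, hg⟩ := Torbit_eq_smul_of_mem_iUnion hcomm hx hy
  rw [hg, ncard_Torbit_smul hcomm]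

theorem image_Torbit_iUnion (hcomm : ∀ (g : G) (y : X), g • T y = T (g • y))
    (hx : x ∈ periodicPts T) :
    Torbit T '' ⋃ g : G, Torbit T (g • x) = Torbit T '' orbit G x := by
  ext A
  constructor
  · rintro ⟨y, hy, rfl⟩
    obtain ⟨g, hg⟩ := Torbit_eq_smul_of_mem_iUnion hcomm hx hy
    exact ⟨g • x, mem_orbit x g, hg.symm⟩
  · rintro ⟨_, ⟨g, rfl⟩, rfl⟩
    exact ⟨g • x, mem_iUnion.mpr ⟨g, mem_Torbit_self T _⟩, rfl⟩

theorem ncard_image_Torbit_orbit_mul (hcomm : ∀ (g : G) (y : X), g • T y = T (g • y))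
    (hx : x ∈ periodicPts T) :
    (Torbit T '' orbit G x).ncard * (Torbit T x ∩ orbit G x).ncard = (orbit G x).ncard := by
  refine ncard_image_mul_of_ncard_fiber_eq _ ?_
  rintro _ ⟨g, rfl⟩
  have hfiber : {z ∈ orbit G x | Torbit T z = Torbit T (g • x)} =
      Torbit T (g • x) ∩ orbit G (g • x) := by
    rw [orbit_smul, inter_comm]
    ext z
    exact and_congr_right fun _ => Torbit_eq_iff (smul_mem_periodicPts hcomm hx g)
  rw [hfiber, ncard_Torbit_inter_orbit_smul hcomm]

theorem ncard_image_Torbit_iUnion_mul (hcomm : ∀ (g : G) (y : X), g • T y = T (g • y))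
    (hx : x ∈ periodicPts T) :
    (Torbit T '' ⋃ g : G, Torbit T (g • x)).ncard * (Torbit T x).ncard =
      (⋃ g : G, Torbit T (g • x)).ncard := by
  refine ncard_image_mul_of_ncard_fiber_eq _ fun y hy => ?_
  obtain ⟨g, hg⟩ := mem_iUnion.mp hy
  have hgx := smul_mem_periodicPts hcomm hx g
  have hfiber : {z ∈ ⋃ g : G, Torbit T (g • x) | Torbit T z = Torbit T y} = Torbit T y := by
    rw [Torbit_eq_of_mem hgx hg]
    ext z
    rw [mem_ofPred_eq, Torbit_eq_iff hgx]
    exact and_iff_right_of_imp fun hz => mem_iUnion.mpr ⟨g, hz⟩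
  rw [hfiber, ncard_Torbit_of_mem_iUnion hcomm hx hy]

end Equivariant

theorem stmt_19_general {X G : Type*} [Group G] [MulAction G X]
    (T : X → X) (hcomm : ∀ (g : G) (y : X), g • T y = T (g • y))
    (T' : Quotient (MulAction.orbitRel G X) → Quotient (MulAction.orbitRel G X))
    (hT' : ∀ y : X, T' (Quotient.mk (MulAction.orbitRel G X) y) =
        Quotient.mk (MulAction.orbitRel G X) (T y))
    (x : X) (hx : x ∈ Function.periodicPts T) (k : ℕ)
    (hk : (Torbit T x ∩ MulAction.orbit G x).ncard = k) :
    -- |O_{T'}(π(x))| · k = |O_T(x)|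
    (Torbit T' (Quotient.mk (MulAction.orbitRel G X) x)).ncard * k =
        (Torbit T x).ncard ∧
    -- the union ⋃_{g∈G} g·O_T(x) consists of exactly |O_G(x)|/k closed T-orbits ...
    {A : Set X | ∃ y ∈ ⋃ g : G, (g • ·) '' Torbit T x, A = Torbit T y}.ncard * k =
        (MulAction.orbit G x).ncard ∧
    -- ... each of length |O_T(x)|
    (∀ y ∈ ⋃ g : G, (g • ·) '' Torbit T x, (Torbit T y).ncard = (Torbit T x).ncard) ∧
    -- |π⁻¹(O_{T'}(π(x))) ∩ ⋃_{g∈G} g·O_T(x)| = |O_G(x)|·|O_T(x)|/k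
    ((Quotient.mk (MulAction.orbitRel G X) ⁻¹'
          Torbit T' (Quotient.mk (MulAction.orbitRel G X) x)) ∩
        ⋃ g : G, (g • ·) '' Torbit T x).ncard * k =
      (MulAction.orbit G x).ncard * (Torbit T x).ncard := by
  subst hk
  have hπ : Semiconj (Quotient.mk (orbitRel G X)) T T' := fun y => (hT' y).symm
  have hU : ∀ g : G, (g • ·) '' Torbit T x = Torbit T (g • x) := fun g =>
    (semiconj_smul hcomm g).image_Torbit x
  have horbits : {A : Set X | ∃ y ∈ ⋃ g : G, Torbit T (g • x), A = Torbit T y} =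
      Torbit T '' orbit G x := by
    rw [← image_Torbit_iUnion hcomm hx]
    ext A
    exact exists_congr fun y => and_congr_right fun _ => eq_comm
  simp only [hU, horbits, inter_eq_right.mpr (iUnion_Torbit_smul_subset_preimage hπ x)]
  refine ⟨ncard_Torbit_mk_mul hcomm hπ hx, ncard_image_Torbit_orbit_mul hcomm hx,
    fun y hy => ncard_Torbit_of_mem_iUnion hcomm hx hy, ?_⟩
  rw [← ncard_image_Torbit_iUnion_mul hcomm hx, image_Torbit_iUnion hcomm hx, mul_right_comm,
    ncard_image_Torbit_orbit_mul hcomm hx]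

theorem stmt_19 {X G : Type*} [Group G] [Fintype G] [MulAction G X]
    (T : X → X) (hcomm : ∀ (g : G) (y : X), g • T y = T (g • y))
    (T' : Quotient (MulAction.orbitRel G X) → Quotient (MulAction.orbitRel G X))
    (hT' : ∀ y : X, T' (Quotient.mk (MulAction.orbitRel G X) y) =
        Quotient.mk (MulAction.orbitRel G X) (T y))
    (x : X) (hx : x ∈ Function.periodicPts T) (k : ℕ)
    (hk : (Torbit T x ∩ MulAction.orbit G x).ncard = k) :
    -- |O_{T'}(π(x))| · k = |O_T(x)|
    (Torbit T' (Quotient.mk (MulAction.orbitRel G X) x)).ncard * k =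
        (Torbit T x).ncard ∧
    -- the union ⋃_{g∈G} g·O_T(x) consists of exactly |O_G(x)|/k closed T-orbits ...
    {A : Set X | ∃ y ∈ ⋃ g : G, (g • ·) '' Torbit T x, A = Torbit T y}.ncard * k =
        (MulAction.orbit G x).ncard ∧
    -- ... each of length |O_T(x)|
    (∀ y ∈ ⋃ g : G, (g • ·) '' Torbit T x, (Torbit T y).ncard = (Torbit T x).ncard) ∧
    -- |π⁻¹(O_{T'}(π(x))) ∩ ⋃_{g∈G} g·O_T(x)| = |O_G(x)|·|O_T(x)|/k
    ((Quotient.mk (MulAction.orbitRel G X) ⁻¹'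
          Torbit T' (Quotient.mk (MulAction.orbitRel G X) x)) ∩
        ⋃ g : G, (g • ·) '' Torbit T x).ncard * k =
      (MulAction.orbit G x).ncard * (Torbit T x).ncard :=
  stmt_19_general T hcomm T' hT' x hx k hk
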